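/- Let (V, e) be an absolute order unit space and let p, q be order projections in V; write p′ = e − p and q′ = e − q. Then the following are equivalent: (1) p ∧̇ q is an order projection; (2) p ∨̇ q is an order projection; (3) p′ ∧̇ q′ is an order projection; (4) p′ ∨̇ q′ is an order projection. -/

import Mathlib

/-- The data of an *absolutely ordered space* on a real ordered vector space `V`:
a positive cone (given by the order, compatible with scalars and generating)
together with an absolute value map `|·| : V → V⁺` satisfying conditions (a)–(e). -/
structure AbsOrderedData (V : Type*) [AddCommGroup V] [PartialOrder V] [IsOrderedAddMonoid V] [Module ℝ V] : Type _ where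
  /-- the absolute value map -/
  vabs : V → V
  /-- the cone is closed under multiplication by nonnegative scalars -/
  smul_nonneg : ∀ (k : ℝ) (v : V), 0 ≤ k → 0 ≤ v → 0 ≤ k • v
  /-- the cone is generating -/
  generating : ∀ v : V, ∃ a b : V, 0 ≤ a ∧ 0 ≤ b ∧ v = a - b
  /-- `|·|` takes values in the cone -/
  abs_mem : ∀ v : V, 0 ≤ vabs v
  /-- (a) `|v| = v` for `v ∈ V⁺` -/
  abs_of_nonneg : ∀ v : V, 0 ≤ v → vabs v = v
  /-- (b) `|v| + v ∈ V⁺` -/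
  abs_add_nonneg : ∀ v : V, 0 ≤ vabs v + v
  /-- (b) `|v| − v ∈ V⁺` -/
  abs_sub_nonneg : ∀ v : V, 0 ≤ vabs v - v
  /-- (c) `|k • v| = |k| • |v|` -/
  abs_smul : ∀ (k : ℝ) (v : V), vabs (k • v) = |k| • vabs v
  /-- (d) if `|u − v| = u + v` and `0 ≤ w ≤ v` then `|u − w| = u + w` -/
  orth_of_le : ∀ u v w : V, vabs (u - v) = u + v → 0 ≤ w → w ≤ v → vabs (u - w) = u + w
  /-- (e), `+` case -/
  orth_add : ∀ u v w : V, vabs (u - v) = u + v → vabs (u - w) = u + w →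
    vabs (u - (v + w)) = u + vabs (v + w)
  /-- (e), `−` case -/
  orth_sub : ∀ u v w : V, vabs (u - v) = u + v → vabs (u - w) = u + w →
    vabs (u - (v - w)) = u + vabs (v - w)

namespace AbsOrderedData

variable {V : Type*} [AddCommGroup V] [PartialOrder V] [IsOrderedAddMonoid V] [Module ℝ V]

/-- `e` is an order unit for `V`. -/
def IsOrderUnit (e : V) : Prop :=
  ∀ v : V, ∃ k : ℝ, 0 < k ∧ -(k • e) ≤ v ∧ v ≤ k • e

/-- The order unit (semi)norm `‖v‖ = inf {k > 0 : −k•e ≤ v ≤ k•e}` determined by `e`. -/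
noncomputable def ounorm (e : V) (v : V) : ℝ :=
  sInf {k : ℝ | 0 < k ∧ -(k • e) ≤ v ∧ v ≤ k • e}

/-- `u ⊥ v` : `|u − v| = u + v`. -/
def orth (D : AbsOrderedData V) (u v : V) : Prop :=
  D.vabs (u - v) = u + v

/-- `u ⊥∞ v` : `‖α•u + β•v‖ = max ‖α•u‖ ‖β•v‖` for all real `α, β`. -/
def orthInfty (e u v : V) : Prop :=
  ∀ α β : ℝ, ounorm e (α • u + β • v) = max (ounorm e (α • u)) (ounorm e (β • v))

/-- `u ⊥∞ᵃ v` : `u₁ ⊥∞ v₁` whenever `0 ≤ u₁ ≤ u` and `0 ≤ v₁ ≤ v`. -/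
def orthInftyAbs (e u v : V) : Prop :=
  ∀ u₁ v₁ : V, 0 ≤ u₁ → u₁ ≤ u → 0 ≤ v₁ → v₁ ≤ v → orthInfty e u₁ v₁

/-- The cone `V⁺` is closed with respect to the order unit norm determined by `e`. -/
def PosConeClosed (e : V) : Prop :=
  ∀ v : V, (∀ ε : ℝ, 0 < ε → ∃ w : V, 0 ≤ w ∧ ounorm e (v - w) < ε) → 0 ≤ v

/-- `(V, e)` is an *absolute order unit space*: an absolutely ordered space with an order
unit `e`, a norm-closed cone, and `⊥ = ⊥∞ᵃ` on the cone. -/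
structure IsAbsOrderUnitSpace (D : AbsOrderedData V) (e : V) : Prop where
  isOrderUnit : IsOrderUnit e
  posConeClosed : PosConeClosed e
  orth_iff_orthInftyAbs : ∀ u v : V, 0 ≤ u → 0 ≤ v → (D.orth u v ↔ orthInftyAbs e u v)

/-- `u ∧̇ v = (1/2)(u + v − |u − v|)`. -/
noncomputable def wedge (D : AbsOrderedData V) (u v : V) : V :=
  (2⁻¹ : ℝ) • (u + v - D.vabs (u - v))

/-- `u ∨̇ v = (1/2)(u + v + |u − v|)`. -/
noncomputable def vee (D : AbsOrderedData V) (u v : V) : V :=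
  (2⁻¹ : ℝ) • (u + v + D.vabs (u - v))

/-- `p` is an *order projection*: `0 ≤ p ≤ e` and `p ⊥ (e − p)`. -/
def IsOP (D : AbsOrderedData V) (e p : V) : Prop :=
  0 ≤ p ∧ p ≤ e ∧ D.orth p (e - p)

/-- `u` and `v` are *absolutely compatible*: `|u − v| + |u + v − e| = e`. -/
def AbsCompat (D : AbsOrderedData V) (e u v : V) : Prop :=
  D.vabs (u - v) + D.vabs (u + v - e) = e

end AbsOrderedData

section Aux
open AbsOrderedData

variable {V : Type*} [AddCommGroup V] [PartialOrder V] [IsOrderedAddMonoid V] [Module ℝ V]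

private lemma aux_abs_neg (D : AbsOrderedData V) (v : V) : D.vabs (-v) = D.vabs v := by
  have h := D.abs_smul (-1) v
  simpa using h

private lemma aux_orth_symm (D : AbsOrderedData V) {u v : V} (h : D.orth u v) : D.orth v u := by
  unfold AbsOrderedData.orth at h ⊢
  rw [show v - u = -(u - v) by abel, aux_abs_neg, h]
  abel

private lemma aux_orth_add (D : AbsOrderedData V) {u v w : V} (h1 : D.orth u v)
    (h2 : D.orth u w) (h3 : 0 ≤ v + w) : D.orth u (v + w) := by
  have h4 := D.orth_add u v w h1 h2
  unfold AbsOrderedData.orth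
  rwa [D.abs_of_nonneg _ h3] at h4

private lemma aux_bddBelow (e v : V) :
    BddBelow {k : ℝ | 0 < k ∧ -(k • e) ≤ v ∧ v ≤ k • e} :=
  ⟨0, fun k hk => le_of_lt hk.1⟩

private lemma aux_ounorm_le_one (D : AbsOrderedData V) {e v : V}
    (he : 0 ≤ e) (h0 : 0 ≤ v) (h1 : v ≤ e) : ounorm e v ≤ 1 := by
  apply le_of_forall_pos_le_add
  intro ε hε
  apply csInf_le (aux_bddBelow e v)
  refine ⟨by linarith, ?_, ?_⟩
  · exact le_trans (neg_nonpos.mpr (D.smul_nonneg _ _ (by linarith) he)) h0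
  · have h2 : 0 ≤ ε • e := D.smul_nonneg _ _ hε.le he
    have h3 : (1 + ε) • e = e + ε • e := by rw [add_smul, one_smul]
    calc v ≤ e := h1
      _ ≤ (1 + ε) • e := by rw [h3]; exact le_add_of_nonneg_right h2

private lemma aux_le_of_ounorm_le_one (D : AbsOrderedData V) {e : V}
    (hV : D.IsAbsOrderUnitSpace e) (he : 0 ≤ e) {v : V} (h : ounorm e v ≤ 1) : v ≤ e := by
  have key : 0 ≤ e - v := by
    apply hV.posConeClosed
    intro ε hε
    have hne : {k : ℝ | 0 < k ∧ -(k • e) ≤ v ∧ v ≤ k • e}.Nonempty := by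
      obtain ⟨k, hk, hk1, hk2⟩ := hV.isOrderUnit v
      exact ⟨k, hk, hk1, hk2⟩
    have hlt : ounorm e v < 1 + ε / 3 := lt_of_le_of_lt h (by linarith)
    obtain ⟨k, hkS, hk⟩ := (csInf_lt_iff (aux_bddBelow e v) hne).mp hlt
    refine ⟨(1 + ε / 3) • e - v, ?_, ?_⟩
    · have h4 : 0 ≤ ((1 + ε / 3) - k) • e := D.smul_nonneg _ _ (by linarith) he
      rw [sub_smul] at h4
      exact sub_nonneg.mpr (le_trans hkS.2.2 (sub_nonneg.mp h4))
    · have harg : (e - v) - ((1 + ε / 3) • e - v) = -((ε / 3) • e) := by module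
      rw [harg]
      have hmem : (2 * ε / 3) ∈ {k : ℝ | 0 < k ∧ -(k • e) ≤ -((ε / 3) • e) ∧
          -((ε / 3) • e) ≤ k • e} := by
        refine ⟨by linarith, ?_, ?_⟩
        · have : 0 ≤ ((2 * ε / 3) - ε / 3) • e := D.smul_nonneg _ _ (by linarith) he
          rw [sub_smul] at this
          exact neg_le_neg (sub_nonneg.mp this)
        · have : 0 ≤ ((2 * ε / 3) + ε / 3) • e := D.smul_nonneg _ _ (by linarith) he
          rw [add_smul] at this
          exact neg_le_iff_add_nonneg.mpr this
      calc ounorm e (-((ε / 3) • e)) ≤ 2 * ε / 3 := csInf_le (aux_bddBelow e _) hmem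
        _ < ε := by linarith
  exact sub_nonneg.mp key

private lemma aux_norm_add (D : AbsOrderedData V) {e : V} (hV : D.IsAbsOrderUnitSpace e)
    {u v : V} (hu : 0 ≤ u) (hv : 0 ≤ v) (h : D.orth u v) :
    ounorm e (u + v) = max (ounorm e u) (ounorm e v) := by
  have h2 := (hV.orth_iff_orthInftyAbs u v hu hv).mp h u v hu le_rfl hv le_rfl 1 1
  simpa using h2

private lemma aux_isOP_compl (D : AbsOrderedData V) {e x : V} (h : D.IsOP e x) :
    D.IsOP e (e - x) := by
  obtain ⟨h0, h1, h2⟩ := h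
  refine ⟨sub_nonneg.mpr h1, sub_le_self e h0, ?_⟩
  rw [show e - (e - x) = x by abel]
  exact aux_orth_symm D h2

private lemma aux_wedge_compl (D : AbsOrderedData V) (e p q : V) :
    D.wedge (e - p) (e - q) = e - D.vee p q := by
  unfold AbsOrderedData.wedge AbsOrderedData.vee
  rw [show (e - p) - (e - q) = -(p - q) by abel, aux_abs_neg]
  module

private lemma aux_main (D : AbsOrderedData V) (e : V) (hV : D.IsAbsOrderUnitSpace e)
    (p q : V) (hp : D.IsOP e p) (hq : D.IsOP e q)
    (ha : D.IsOP e (D.wedge p q)) : D.IsOP e (D.vee p q) := by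
  obtain ⟨ha0, hae, haorth⟩ := ha
  have he : 0 ≤ e := le_trans hp.1 hp.2.1
  have hr0 : 0 ≤ D.vabs (p - q) := D.abs_mem _
  have hpa : p - D.wedge p q = (2⁻¹ : ℝ) • (D.vabs (p - q) + (p - q)) := by
    unfold AbsOrderedData.wedge; module
  have hqa : q - D.wedge p q = (2⁻¹ : ℝ) • (D.vabs (p - q) - (p - q)) := by
    unfold AbsOrderedData.wedge; module
  have hpa0 : 0 ≤ p - D.wedge p q := by
    rw [hpa]; exact D.smul_nonneg _ _ (by norm_num) (D.abs_add_nonneg _)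
  have hqa0 : 0 ≤ q - D.wedge p q := by
    rw [hqa]; exact D.smul_nonneg _ _ (by norm_num) (D.abs_sub_nonneg _)
  have hsum : (p - D.wedge p q) + (q - D.wedge p q) = D.vabs (p - q) := by
    rw [hpa, hqa]; module
  have hbeq : D.vee p q = D.wedge p q + D.vabs (p - q) := by
    unfold AbsOrderedData.wedge AbsOrderedData.vee; module
  have horth_pq : D.orth (p - D.wedge p q) (q - D.wedge p q) := by
    show D.vabs _ = _
    rw [show (p - D.wedge p q) - (q - D.wedge p q) = p - q by abel]
    exact hsum.symm
  have h1 : D.orth (D.wedge p q) (p - D.wedge p q) :=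
    D.orth_of_le _ _ _ haorth hpa0 (sub_le_sub_right hp.2.1 _)
  have h2 : D.orth (D.wedge p q) (q - D.wedge p q) :=
    D.orth_of_le _ _ _ haorth hqa0 (sub_le_sub_right hq.2.1 _)
  have h3 : D.orth (D.wedge p q) (D.vabs (p - q)) := by
    have h3' := aux_orth_add D h1 h2 (by rw [hsum]; exact hr0)
    rwa [hsum] at h3'
  have hn_pa : ounorm e (p - D.wedge p q) ≤ 1 :=
    aux_ounorm_le_one D he hpa0 (le_trans (sub_le_self p ha0) hp.2.1)
  have hn_qa : ounorm e (q - D.wedge p q) ≤ 1 :=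
    aux_ounorm_le_one D he hqa0 (le_trans (sub_le_self q ha0) hq.2.1)
  have hn_r : ounorm e (D.vabs (p - q)) ≤ 1 := by
    have hmax := aux_norm_add D hV hpa0 hqa0 horth_pq
    rw [hsum] at hmax
    rw [hmax]; exact max_le hn_pa hn_qa
  have hn_a : ounorm e (D.wedge p q) ≤ 1 := aux_ounorm_le_one D he ha0 hae
  have hn_b : ounorm e (D.vee p q) ≤ 1 := by
    rw [hbeq, aux_norm_add D hV ha0 hr0 h3]
    exact max_le hn_a hn_r
  have hble : D.vee p q ≤ e := aux_le_of_ounorm_le_one D hV he hn_b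
  have hb0 : 0 ≤ D.vee p q := by rw [hbeq]; exact add_nonneg ha0 hr0
  have hx0 : 0 ≤ e - D.vee p q := sub_nonneg.mpr hble
  have hab : D.wedge p q ≤ D.vee p q := by
    rw [hbeq]; exact le_add_of_nonneg_right hr0
  have hxa : D.orth (D.wedge p q) (e - D.vee p q) :=
    D.orth_of_le _ _ _ haorth hx0 (sub_le_sub_left hab e)
  have hpb : p ≤ D.vee p q := by
    have hd : D.vee p q - p = (2⁻¹ : ℝ) • (D.vabs (p - q) - (p - q)) := by
      unfold AbsOrderedData.vee; module
    have : 0 ≤ D.vee p q - p := by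
      rw [hd]; exact D.smul_nonneg _ _ (by norm_num) (D.abs_sub_nonneg _)
    exact sub_nonneg.mp this
  have hqb : q ≤ D.vee p q := by
    have hd : D.vee p q - q = (2⁻¹ : ℝ) • (D.vabs (p - q) + (p - q)) := by
      unfold AbsOrderedData.vee; module
    have : 0 ≤ D.vee p q - q := by
      rw [hd]; exact D.smul_nonneg _ _ (by norm_num) (D.abs_add_nonneg _)
    exact sub_nonneg.mp this
  have step1p : D.orth (e - p) (p - D.wedge p q) :=
    D.orth_of_le _ _ _ (aux_orth_symm D hp.2.2) hpa0 (sub_le_self p ha0)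
  have step2p : D.orth (p - D.wedge p q) (e - D.vee p q) :=
    D.orth_of_le _ _ _ (aux_orth_symm D step1p) hx0 (sub_le_sub_left hpb e)
  have step1q : D.orth (e - q) (q - D.wedge p q) :=
    D.orth_of_le _ _ _ (aux_orth_symm D hq.2.2) hqa0 (sub_le_self q ha0)
  have step2q : D.orth (q - D.wedge p q) (e - D.vee p q) :=
    D.orth_of_le _ _ _ (aux_orth_symm D step1q) hx0 (sub_le_sub_left hqb e)
  have step3 : D.orth (e - D.vee p q) (D.vabs (p - q)) := by
    have h' := aux_orth_add D (aux_orth_symm D step2p) (aux_orth_symm D step2q)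
      (by rw [hsum]; exact hr0)
    rwa [hsum] at h'
  have step4 : D.orth (e - D.vee p q) (D.vee p q) := by
    have h' := aux_orth_add D (aux_orth_symm D hxa) step3 (by rw [← hbeq]; exact hb0)
    rwa [← hbeq] at h'
  exact ⟨hb0, hble, aux_orth_symm D step4⟩

private lemma aux_iff (D : AbsOrderedData V) (e : V) (hV : D.IsAbsOrderUnitSpace e)
    (p q : V) (hp : D.IsOP e p) (hq : D.IsOP e q) :
    D.IsOP e (D.wedge p q) ↔ D.IsOP e (D.vee p q) := by
  constructor
  · exact aux_main D e hV p q hp hq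
  · intro hb
    have h1 : D.IsOP e (D.wedge (e - p) (e - q)) := by
      rw [aux_wedge_compl]; exact aux_isOP_compl D hb
    have h2 := aux_main D e hV _ _ (aux_isOP_compl D hp) (aux_isOP_compl D hq) h1
    have h3 := aux_isOP_compl D h2
    have h4 : e - D.vee (e - p) (e - q) = D.wedge p q := by
      have h5 := aux_wedge_compl D e (e - p) (e - q)
      rw [show e - (e - p) = p by abel, show e - (e - q) = q by abel] at h5
      exact h5.symm
    rwa [h4] at h3

end Aux

open AbsOrderedData in
/-- In an absolute order unit space `(V, e)`, for order projections
`p, q` with `p′ = e − p`, `q′ = e − q`, the conditions that `p ∧̇ q`, `p ∨̇ q`,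
`p′ ∧̇ q′`, `p′ ∨̇ q′` be order projections are all equivalent. -/
theorem orderProjection_wedge_vee_tfae {V : Type*} [AddCommGroup V] [PartialOrder V] [IsOrderedAddMonoid V] [Module ℝ V]
    (D : AbsOrderedData V) (e : V) (hV : D.IsAbsOrderUnitSpace e)
    (p q : V) (hp : D.IsOP e p) (hq : D.IsOP e q) :
    (D.IsOP e (D.wedge p q) ↔ D.IsOP e (D.vee p q)) ∧
    (D.IsOP e (D.vee p q) ↔ D.IsOP e (D.wedge (e - p) (e - q))) ∧
    (D.IsOP e (D.wedge (e - p) (e - q)) ↔ D.IsOP e (D.vee (e - p) (e - q))) := by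

  have hp' : D.IsOP e (e - p) := aux_isOP_compl D hp
  have hq' : D.IsOP e (e - q) := aux_isOP_compl D hq
  refine ⟨aux_iff D e hV p q hp hq, ?_, aux_iff D e hV _ _ hp' hq'⟩
  rw [aux_wedge_compl]
  constructor
  · exact aux_isOP_compl D
  · intro h
    have h2 := aux_isOP_compl D h
    rwa [show e - (e - D.vee p q) = D.vee p q by abel] at h2
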